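/- arXiv:1904.09875 — 4 statements merged into one kernel-verified Lean document; each statement's English description precedes it below -/
import Mathlib

section
/- Let (S, ≤) be a preorder, T a type, and π : S → List T a map that is order-reflecting, i.e. whenever π(x) is a prefix of π(y) then x ≤ y. Let X ⊆ S be a lower set (downwards-closed: if a ≤ b and b ∈ X then a ∈ X) and let Y ⊆ S be any subset. Then Y ⊆ X if and only if pref(π '' Y) ⊆ pref(π '' X), where π '' Z is the image of Z under π. -/
/-- `pref X` is the set of all prefixes of members of the set of words `X`. -/
def pref {T : Type*} (X : Set (List T)) : Set (List T) := {s | ∃ t ∈ X, s <+: t}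

/-- Let `(S, ≤)` be a preorder, `T` a type, and `π : S → List T` order-reflecting
(whenever `π x` is a prefix of `π y` then `x ≤ y`).  Let `X ⊆ S` be a lower set and
`Y ⊆ S` any subset.  Then `Y ⊆ X` iff `pref (π '' Y) ⊆ pref (π '' X)`. -/
theorem stmt0 {S T : Type*} [Preorder S] (π : S → List T)
    (hπ : ∀ x y : S, π x <+: π y → x ≤ y)
    (X : Set S) (hX : IsLowerSet X) (Y : Set S) :
    Y ⊆ X ↔ pref (π '' Y) ⊆ pref (π '' X) := by
  constructor
  · rintro h s ⟨t, ⟨y, hy, rfl⟩, hst⟩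
    exact ⟨π y, ⟨y, h hy, rfl⟩, hst⟩
  · intro h y hy
    obtain ⟨t, ⟨x, hx, rfl⟩, hpre⟩ := h ⟨π y, ⟨y, hy, rfl⟩, List.prefix_refl _⟩
    exact hX (hπ _ _ hpre) hx
end

section
/- Let α and β be types and r : α → β → Prop a relation; define M : Set α → Set β by M(X) = {y | ∃ x ∈ X, r x y}. Let f, g : Set α → Set α be monotone functions that are ω-continuous, i.e. for every increasing sequence of sets X₀ ⊆ X₁ ⊆ X₂ ⊆ … one has f(⋃ₙ Xₙ) = ⋃ₙ f(Xₙ), and similarly for g. Assume (i) for all X, Y ⊆ α, if M(X) = M(Y) then M(f(X)) = M(f(Y)) and M(g(X)) = M(g(Y)); and (ii) for all X ⊆ α, M(f(X)) = M(g(X)). Then M(P₁) = M(P₂), where P₁ and P₂ are the least fixed points of f and g respectively (which exist since Set α is a complete lattice and f, g are monotone). -/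
/-- The image of a set under a relation: `relImage r X = {y | ∃ x ∈ X, r x y}`. -/
def relImage {α β : Type*} (r : α → β → Prop) (X : Set α) : Set β := {y | ∃ x ∈ X, r x y}

lemma relImage_iUnion {α β : Type*} (r : α → β → Prop) (c : ℕ → Set α) :
    relImage r (⋃ n, c n) = ⋃ n, relImage r (c n) := by
  ext y
  simp only [relImage, Set.mem_iUnion, Set.mem_setOf_eq]
  constructor
  · rintro ⟨x, ⟨n, hx⟩, hr⟩; exact ⟨n, x, hx, hr⟩
  · rintro ⟨n, x, hx, hr⟩; exact ⟨x, ⟨n, hx⟩, hr⟩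

lemma kleene {α : Type*} (f : Set α →o Set α)
    (hfc : ∀ c : ℕ → Set α, (∀ n, c n ⊆ c (n + 1)) → f (⋃ n, c n) = ⋃ n, f (c n)) :
    OrderHom.lfp f = ⋃ n, (fun X => f X)^[n] ∅ := by
  set c : ℕ → Set α := fun n => (fun X => f X)^[n] ∅ with hc
  have hmono : ∀ n, c n ⊆ c (n + 1) := by
    intro n
    induction n with
    | zero => simp [c]
    | succ k ih =>
      simp only [c, Function.iterate_succ_apply'] at *
      exact f.mono ih
  have hfix : f (⋃ n, c n) = ⋃ n, c n := by
    rw [hfc c hmono]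
    apply subset_antisymm
    · exact Set.iUnion_mono' fun n => ⟨n + 1, by simp only [c, Function.iterate_succ_apply']; exact le_refl _⟩
    · apply Set.iUnion_subset
      intro n
      rcases n with _ | k
      · simp [c]
      · exact Set.subset_iUnion_of_subset k (by
          simp only [c, Function.iterate_succ_apply']; exact le_refl _)
  apply le_antisymm
  · exact OrderHom.lfp_le f (le_of_eq hfix)
  · apply Set.iUnion_subset
    intro n
    induction n with
    | zero => simp [c]
    | succ k ih =>
      have : f (c k) ≤ f (OrderHom.lfp f) := f.mono ih
      rw [OrderHom.map_lfp] at this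
      simpa only [c, Function.iterate_succ_apply'] using this

/-- Let `r : α → β → Prop` and `M := relImage r`.  Let `f, g : Set α → Set α` be monotone
and ω-continuous.  If (i) `M X = M Y` implies `M (f X) = M (f Y)` and `M (g X) = M (g Y)`,
and (ii) `M (f X) = M (g X)` for all `X`, then the least fixed points `P₁` of `f` and `P₂`
of `g` satisfy `M P₁ = M P₂`. -/
theorem stmt2 {α β : Type*} (r : α → β → Prop)
    (f g : Set α →o Set α)
    (hfc : ∀ c : ℕ → Set α, (∀ n, c n ⊆ c (n + 1)) → f (⋃ n, c n) = ⋃ n, f (c n))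
    (hgc : ∀ c : ℕ → Set α, (∀ n, c n ⊆ c (n + 1)) → g (⋃ n, c n) = ⋃ n, g (c n))
    (hcomp : ∀ X Y : Set α, relImage r X = relImage r Y →
      relImage r (f X) = relImage r (f Y) ∧ relImage r (g X) = relImage r (g Y))
    (hagree : ∀ X : Set α, relImage r (f X) = relImage r (g X)) :
    relImage r (OrderHom.lfp f) = relImage r (OrderHom.lfp g) := by
  rw [kleene f hfc, kleene g hgc, relImage_iUnion, relImage_iUnion]
  have key : ∀ n, relImage r ((fun X => f X)^[n] ∅) = relImage r ((fun X => g X)^[n] ∅) := by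
    intro n
    induction n with
    | zero => rfl
    | succ k ih =>
      rw [Function.iterate_succ_apply', Function.iterate_succ_apply']
      rw [(hcomp _ _ ih).1, hagree]
  simp only [key]
end

section
/- Fix a finite nonempty alphabet Σ equipped with a linear order, and let T := Σ ⊕ Σ'' ⊕ {done}, where Σ'' is a disjoint copy of Σ (writing a'' for the copy of a) and done is a fresh symbol. Define π : FL_Σ → T* recursively on observations by: π(s⌢⟨•⟩) = π(s); π(s⌢⟨x⟩) = π(s)⌢⟨x⟩ for an event x ∈ Σ; and π(s⌢⟨A⟩) = π(s)⌢⟨x₁'', …, x_k'', done⟩ for an acceptance set A = {x₁ < … < x_k} ⊆ Σ listed in increasing order (in particular, the empty acceptance set ∅ contributes just done). Then π is order-reflecting: whenever π(u) is a prefix of π(v) for u, v ∈ FL_Σ, we have u ≤ v in the extension order. -/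
/-- A finite linear observation over alphabet `α`: an initial annotation `A₀`
(`none` = `•`, `some A` = a stable acceptance set) together with a list of pairs
`(aᵢ, Aᵢ)` of an event and the following annotation. -/
abbrev FLObs (α : Type) := Option (Finset α) × List (α × Option (Finset α))

/-- Extension on annotations: either they are equal or the first is `•`. -/
def optExt {α : Type} (A B : Option (Finset α)) : Prop := A = B ∨ A = none

/-- The extension order on finite linear observations:
`⟨A₀,a₁,…,aₘ,Aₘ⟩ ≤ ⟨B₀,b₁,…,bₙ,Bₙ⟩` iff `m ≤ n`, `aᵢ = bᵢ` for `1 ≤ i ≤ m`, and for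
each `0 ≤ i ≤ m` either `Aᵢ = Bᵢ` or `Aᵢ = •`. -/
def extLE {α : Type} (u v : FLObs α) : Prop :=
  optExt u.1 v.1 ∧ u.2.length ≤ v.2.length ∧
    ∀ (i : ℕ) (hi : i < u.2.length) (hj : i < v.2.length),
      (u.2.get ⟨i, hi⟩).1 = (v.2.get ⟨i, hj⟩).1 ∧
        optExt (u.2.get ⟨i, hi⟩).2 (v.2.get ⟨i, hj⟩).2

/-- Encoding of an annotation over `T = Σ ⊕ Σ'' ⊕ {done}`: `•` contributes nothing,
an acceptance set `A = {x₁ < … < x_k}` contributes `x₁'', …, x_k'', done`.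
Here `Sum.inr (Sum.inl a)` is `a''` and `Sum.inr (Sum.inr ())` is `done`. -/
def encAnnT {α : Type} [LinearOrder α] : Option (Finset α) → List (α ⊕ α ⊕ Unit)
  | none => []
  | some A => (A.sort (· ≤ ·)).map (fun a => Sum.inr (Sum.inl a)) ++ [Sum.inr (Sum.inr ())]

/-- The map `π : FL_Σ → T*`: events contribute themselves (as `Sum.inl`), `•`
contributes the empty word, and acceptance sets contribute their elements
(double-primed, in increasing order) followed by `done`. -/
def piFL {α : Type} [LinearOrder α] (u : FLObs α) : List (α ⊕ α ⊕ Unit) :=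
  encAnnT u.1 ++ (u.2.map (fun p => Sum.inl p.1 :: encAnnT p.2)).flatten

lemma doneAlign {α β : Type} (g : α → β) (d : β) (hg : ∀ x, g x ≠ d)
    (hinj : Function.Injective g) :
    ∀ (l₁ l₂ : List α) (s t : List β),
      l₁.map g ++ d :: s <+: l₂.map g ++ d :: t → l₁ = l₂ ∧ s <+: t := by
  intro l₁
  induction l₁ with
  | nil =>
    intro l₂ s t h
    cases l₂ with
    | nil =>
      simp only [List.map_nil, List.nil_append, List.cons_prefix_cons] at h
      exact ⟨rfl, h.2⟩
    | cons y l₂' =>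
      simp only [List.map_nil, List.nil_append, List.map_cons, List.cons_append,
        List.cons_prefix_cons] at h
      exact absurd h.1.symm (hg y)
  | cons x l₁' ih =>
    intro l₂ s t h
    cases l₂ with
    | nil =>
      simp only [List.map_nil, List.nil_append, List.map_cons, List.cons_append,
        List.cons_prefix_cons] at h
      exact absurd h.1 (hg x)
    | cons y l₂' =>
      simp only [List.map_cons, List.cons_append, List.cons_prefix_cons] at h
      obtain ⟨hxy, h'⟩ := h
      obtain ⟨h1, h2⟩ := ih l₂' s t h'
      exact ⟨by rw [hinj hxy, h1], h2⟩

lemma annCase {α : Type} [LinearOrder α] (A B : Option (Finset α))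
    (s t : List (α ⊕ α ⊕ Unit))
    (hs : s = [] ∨ ∃ a s', s = Sum.inl a :: s')
    (ht : t = [] ∨ ∃ a t', t = Sum.inl a :: t')
    (h : encAnnT A ++ s <+: encAnnT B ++ t) :
    (A = B ∧ s <+: t) ∨ (A = none ∧ s = []) := by
  cases A with
  | none =>
    rcases hs with rfl | ⟨a, s', rfl⟩
    · exact Or.inr ⟨rfl, rfl⟩
    · cases B with
      | none =>
        simp only [encAnnT, List.nil_append] at h
        exact Or.inl ⟨rfl, h⟩
      | some SB =>
        exfalso
        simp only [encAnnT, List.nil_append] at h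
        rcases hSB : SB.sort (· ≤ ·) with _ | ⟨x, l⟩ <;>
          rw [hSB] at h <;>
          simp only [List.map_nil, List.map_cons, List.nil_append, List.cons_append,
            List.append_assoc, List.cons_prefix_cons] at h <;>
          exact absurd h.1 (by simp)
  | some SA =>
    cases B with
    | none =>
      exfalso
      simp only [encAnnT, List.nil_append] at h
      rcases ht with rfl | ⟨a, t', rfl⟩
      · rw [List.prefix_nil] at h
        simp at h
      · rcases hSA : SA.sort (· ≤ ·) with _ | ⟨x, l⟩ <;>
          rw [hSA] at h <;>
          simp only [List.map_nil, List.map_cons, List.nil_append, List.cons_append,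
            List.append_assoc, List.cons_prefix_cons] at h <;>
          exact absurd h.1 (by simp)
    | some SB =>
      have h' : (SA.sort (· ≤ ·)).map (fun a => Sum.inr (Sum.inl a)) ++
          (Sum.inr (Sum.inr ()) : α ⊕ α ⊕ Unit) :: s <+:
          (SB.sort (· ≤ ·)).map (fun a => Sum.inr (Sum.inl a)) ++
          (Sum.inr (Sum.inr ()) : α ⊕ α ⊕ Unit) :: t := by
        simpa only [encAnnT, List.append_assoc, List.singleton_append] using h
      obtain ⟨hsort, hst⟩ := doneAlign (fun a : α => (Sum.inr (Sum.inl a) : α ⊕ α ⊕ Unit))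
        (Sum.inr (Sum.inr ())) (by simp) (fun a b hab => by simpa using hab) _ _ _ _ h'
      have : SA = SB := by
        ext a
        rw [← Finset.mem_sort (α := α) (· ≤ ·), ← Finset.mem_sort (α := α) (· ≤ ·), hsort]
      exact Or.inl ⟨by rw [this], hst⟩

lemma mainLemma {α : Type} [LinearOrder α] :
    ∀ (lu : List (α × Option (Finset α))) (A B : Option (Finset α))
      (lv : List (α × Option (Finset α))),
      encAnnT A ++ (lu.map (fun p => Sum.inl p.1 :: encAnnT p.2)).flatten <+:
        encAnnT B ++ (lv.map (fun p => Sum.inl p.1 :: encAnnT p.2)).flatten →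
      extLE (A, lu) (B, lv) := by
  intro lu
  induction lu with
  | nil =>
    intro A B lv h
    have hcase := annCase A B _ _ (Or.inl (by simp)) ?_ h
    · refine ⟨?_, by simp, ?_⟩
      · rcases hcase with ⟨hAB, _⟩ | ⟨hA, _⟩
        · exact Or.inl hAB
        · exact Or.inr hA
      · intro i hi hj
        simp at hi
    · rcases lv with _ | ⟨q, lv'⟩
      · exact Or.inl (by simp)
      · exact Or.inr ⟨q.1, encAnnT q.2 ++ (lv'.map (fun p => Sum.inl p.1 :: encAnnT p.2)).flatten, by simp⟩
  | cons p lu' ih =>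
    intro A B lv h
    have hform : ((p :: lu').map (fun p => Sum.inl p.1 :: encAnnT p.2)).flatten =
        (Sum.inl p.1 : α ⊕ α ⊕ Unit) ::
          (encAnnT p.2 ++ (lu'.map (fun p => Sum.inl p.1 :: encAnnT p.2)).flatten) := by
      simp
    rw [hform] at h
    have hcase := annCase A B _ _ (Or.inr ⟨p.1, _, rfl⟩) ?_ h
    · rcases hcase with ⟨hAB, hpre⟩ | ⟨_, habs⟩
      · rcases lv with _ | ⟨q, lv'⟩
        · exfalso
          simp only [List.map_nil, List.flatten_nil, List.prefix_nil] at hpre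
          simp at hpre
        · have hform' : ((q :: lv').map (fun p => Sum.inl p.1 :: encAnnT p.2)).flatten =
              (Sum.inl q.1 : α ⊕ α ⊕ Unit) ::
                (encAnnT q.2 ++ (lv'.map (fun p => Sum.inl p.1 :: encAnnT p.2)).flatten) := by
            simp
          rw [hform', List.cons_prefix_cons] at hpre
          obtain ⟨hpq, hpre'⟩ := hpre
          have hpq : p.1 = q.1 := by simpa using hpq
          have ihres := ih p.2 q.2 lv' hpre'
          refine ⟨Or.inl hAB, Nat.succ_le_succ ihres.2.1, ?_⟩
          intro i hi hj
          cases i with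
          | zero => exact ⟨hpq, ihres.1⟩
          | succ n =>
            exact ihres.2.2 n (by simpa using hi) (by simpa using hj)
      · simp at habs
    · rcases lv with _ | ⟨q, lv'⟩
      · exact Or.inl (by simp)
      · exact Or.inr ⟨q.1, encAnnT q.2 ++ (lv'.map (fun p => Sum.inl p.1 :: encAnnT p.2)).flatten, by simp⟩

/-- `π` is order-reflecting: whenever `π u` is a prefix of `π v`, we have `u ≤ v`
in the extension order. -/
theorem stmt6 {α : Type} [Fintype α] [Nonempty α] [LinearOrder α]
    (u v : FLObs α) (h : piFL u <+: piFL v) : extLE u v := by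
  obtain ⟨A, lu⟩ := u
  obtain ⟨B, lv⟩ := v
  exact mainLemma lu A B lv h
end

section
/- Let Ξ, Θ and Υ be finite alphabets. Suppose R ⊆ Ξ* × Θ* and S ⊆ Θ* × Υ* are each recognised by nondeterministic finite automata with finitely many states (over Ξ ⊕ Θ and Θ ⊕ Υ respectively, in the interleaving sense). Then the composite relation R ; S := {(s, u) ∈ Ξ* × Υ* | ∃ t ∈ Θ*, R(s,t) ∧ S(t,u)} is recognised by a nondeterministic finite automaton with finitely many states over Ξ ⊕ Υ. -/
/-- An NFA over `Ξ ⊕ Θ` recognises a relation `R ⊆ Ξ* × Θ*` if `R s t` holds exactly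
when the NFA accepts some interleaving of `s` (as left letters) and `t` (as right
letters). -/
def Recognises {α β Q : Type} (A : NFA (α ⊕ β) Q) (R : List α → List β → Prop) : Prop :=
  ∀ (s : List α) (t : List β),
    R s t ↔ ∃ w ∈ A.accepts, w.filterMap Sum.getLeft? = s ∧ w.filterMap Sum.getRight? = t

/-! Accepting runs of `A` on `v` and of `B` on `w` whose middle letters agree
(`v` projected to `Θ` equals `w` projected to `Θ`) can be merged into a single word over
`Ξ ⊕ Θ ⊕ Υ`, from which `v`, `w` and the outer word over `Ξ ⊕ Υ` are recovered by projection.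
The product automaton on pairs of states reads the outer letters with one component and takes a
silent move whenever both components consume the same middle letter, so it accepts exactly the
outer projections of such merged words. Determinising it gives an automaton on `Fin n`. -/

theorem NFA.mem_evalFrom_filterMap_cons {α δ σ : Type*} (M : NFA α σ) (f : δ → Option α)
    (c : δ) (z : List δ) (s s' : σ) :
    s' ∈ M.evalFrom {s} ((c :: z).filterMap f) ↔
      ∃ t ∈ M.evalFrom {s} (f c).toList, s' ∈ M.evalFrom {t} (z.filterMap f) := by
  have : (c :: z).filterMap f = (f c).toList ++ z.filterMap f := by
    cases h : f c <;> simp [h]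
  rw [this, NFA.evalFrom_append, NFA.mem_evalFrom_iff_exists]

namespace RelComp

variable {α β γ σ τ : Type*}

def leftPair : α ⊕ β ⊕ γ → Option (α ⊕ β)
  | .inl a => some (.inl a)
  | .inr (.inl b) => some (.inr b)
  | .inr (.inr _) => none

def rightPair : α ⊕ β ⊕ γ → Option (β ⊕ γ)
  | .inl _ => none
  | .inr c => some c

def outerPair : α ⊕ β ⊕ γ → Option (α ⊕ γ)
  | .inl a => some (.inl a)
  | .inr (.inl _) => none
  | .inr (.inr c) => some (.inr c)

theorem getLeft_filterMap_leftPair (z : List (α ⊕ β ⊕ γ)) :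
    (z.filterMap leftPair).filterMap Sum.getLeft? =
      (z.filterMap outerPair).filterMap Sum.getLeft? := by
  simp only [List.filterMap_filterMap]
  congr 1
  funext c
  rcases c with a | b | c <;> rfl

theorem getRight_filterMap_leftPair (z : List (α ⊕ β ⊕ γ)) :
    (z.filterMap leftPair).filterMap Sum.getRight? =
      (z.filterMap rightPair).filterMap Sum.getLeft? := by
  simp only [List.filterMap_filterMap]
  congr 1
  funext c
  rcases c with a | b | c <;> rfl

theorem getRight_filterMap_rightPair (z : List (α ⊕ β ⊕ γ)) :
    (z.filterMap rightPair).filterMap Sum.getRight? =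
      (z.filterMap outerPair).filterMap Sum.getRight? := by
  simp only [List.filterMap_filterMap]
  congr 1
  funext c
  rcases c with a | b | c <;> rfl

theorem exists_merge : ∀ (u : List (α ⊕ β)) (v : List (β ⊕ γ)),
    u.filterMap Sum.getRight? = v.filterMap Sum.getLeft? →
      ∃ z : List (α ⊕ β ⊕ γ), z.filterMap leftPair = u ∧ z.filterMap rightPair = v
  | [], [], _ => ⟨[], rfl, rfl⟩
  | .inl a :: u, v, h => by
    obtain ⟨z, rfl, rfl⟩ := exists_merge u v (by simpa [List.filterMap_cons] using h)
    exact ⟨.inl a :: z, rfl, rfl⟩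
  | u, .inr c :: v, h => by
    obtain ⟨z, rfl, rfl⟩ := exists_merge u v (by simpa [List.filterMap_cons] using h)
    exact ⟨.inr (.inr c) :: z, rfl, rfl⟩
  | .inr b :: u, .inl b' :: v, h => by
    obtain ⟨rfl, hrest⟩ : b = b' ∧ u.filterMap Sum.getRight? = v.filterMap Sum.getLeft? := by
      simpa [List.filterMap_cons] using h
    obtain ⟨z, rfl, rfl⟩ := exists_merge u v hrest
    exact ⟨.inr (.inl b) :: z, rfl, rfl⟩
  | [], .inl _ :: _, h | .inr _ :: _, [], h => by simp at h
termination_by u v => u.length + v.length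

def _root_.NFA.relComp (A : NFA (α ⊕ β) σ) (B : NFA (β ⊕ γ) τ) : εNFA (α ⊕ γ) (σ × τ) where
  step r a := {r' | ∃ c, outerPair c = a ∧ r'.1 ∈ A.evalFrom {r.1} (leftPair c).toList ∧
    r'.2 ∈ B.evalFrom {r.2} (rightPair c).toList}
  start := A.start ×ˢ B.start
  accept := A.accept ×ˢ B.accept

theorem isPath_relComp (A : NFA (α ⊕ β) σ) (B : NFA (β ⊕ γ) τ) (x : List (Option (α ⊕ γ)))
    (p p' : σ) (q q' : τ) :
    (A.relComp B).IsPath (p, q) (p', q') x ↔ ∃ z : List (α ⊕ β ⊕ γ), z.map outerPair = x ∧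
      p' ∈ A.evalFrom {p} (z.filterMap leftPair) ∧ q' ∈ B.evalFrom {q} (z.filterMap rightPair) := by
  induction x generalizing p q with
  | nil => simpa using and_congr eq_comm eq_comm
  | cons a x ih =>
    rw [← List.singleton_append, εNFA.isPath_append]
    simp only [εNFA.isPath_singleton, Prod.exists, ih]
    constructor
    · rintro ⟨p₁, q₁, ⟨c, rfl, hp₁, hq₁⟩, z, rfl, hp', hq'⟩
      exact ⟨c :: z, rfl, (NFA.mem_evalFrom_filterMap_cons ..).2 ⟨p₁, hp₁, hp'⟩,
        (NFA.mem_evalFrom_filterMap_cons ..).2 ⟨q₁, hq₁, hq'⟩⟩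
    · rintro ⟨_ | ⟨c, z⟩, hz, hp', hq'⟩
      · cases hz
      obtain ⟨rfl, rfl⟩ := List.cons_eq_cons.1 hz
      obtain ⟨p₁, hp₁, hp'⟩ := (NFA.mem_evalFrom_filterMap_cons ..).1 hp'
      obtain ⟨q₁, hq₁, hq'⟩ := (NFA.mem_evalFrom_filterMap_cons ..).1 hq'
      exact ⟨p₁, q₁, ⟨c, rfl, hp₁, hq₁⟩, z, rfl, hp', hq'⟩

theorem mem_relComp_accepts (A : NFA (α ⊕ β) σ) (B : NFA (β ⊕ γ) τ) (x : List (α ⊕ γ)) :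
    x ∈ (A.relComp B).accepts ↔ ∃ z : List (α ⊕ β ⊕ γ), z.filterMap outerPair = x ∧
      z.filterMap leftPair ∈ A.accepts ∧ z.filterMap rightPair ∈ B.accepts := by
  simp only [εNFA.mem_accepts_iff_exists_path, NFA.mem_accepts, Prod.exists, isPath_relComp]
  have reduceOption_map_outerPair (z : List (α ⊕ β ⊕ γ)) :
      (z.map outerPair).reduceOption = z.filterMap outerPair := by
    simp [List.reduceOption, List.filterMap_map]
  constructor
  · rintro ⟨p, q, p', q', _, ⟨hp, hq⟩, ⟨hp', hq'⟩, rfl, z, rfl, hpz, hqz⟩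
    exact ⟨z, (reduceOption_map_outerPair z).symm,
      ⟨p', hp', NFA.mem_evalFrom_iff_exists.2 ⟨p, hp, hpz⟩⟩,
      ⟨q', hq', NFA.mem_evalFrom_iff_exists.2 ⟨q, hq, hqz⟩⟩⟩
  · rintro ⟨z, rfl, ⟨p', hp', hpz⟩, ⟨q', hq', hqz⟩⟩
    obtain ⟨p, hp, hpz⟩ := NFA.mem_evalFrom_iff_exists.1 hpz
    obtain ⟨q, hq, hqz⟩ := NFA.mem_evalFrom_iff_exists.1 hqz
    exact ⟨p, q, p', q', _, ⟨hp, hq⟩, ⟨hp', hq'⟩, reduceOption_map_outerPair z, z, rfl, hpz, hqz⟩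

end RelComp

open RelComp in
theorem Recognises.relComp {α β γ σ τ : Type} {R : List α → List β → Prop}
    {S : List β → List γ → Prop} {A : NFA (α ⊕ β) σ} {B : NFA (β ⊕ γ) τ}
    (hA : Recognises A R) (hB : Recognises B S) :
    Recognises (A.relComp B).toNFA (fun s u => ∃ t, R s t ∧ S t u) := by
  intro s u
  constructor
  · rintro ⟨t, hst, htu⟩
    obtain ⟨v, hv, rfl, rfl⟩ := (hA s t).1 hst
    obtain ⟨w, hw, hvw, rfl⟩ := (hB _ u).1 htu
    obtain ⟨z, rfl, rfl⟩ := exists_merge v w hvw.symm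
    exact ⟨_, (mem_relComp_accepts A B _).2 ⟨z, rfl, hv, hw⟩,
      (getLeft_filterMap_leftPair z).symm, (getRight_filterMap_rightPair z).symm⟩
  · rintro ⟨_, hz, rfl, rfl⟩
    obtain ⟨z, rfl, hv, hw⟩ := (mem_relComp_accepts A B _).1 hz
    exact ⟨_, (hA _ _).2 ⟨_, hv, getLeft_filterMap_leftPair z, rfl⟩,
      (hB _ _).2 ⟨_, hw, (getRight_filterMap_leftPair z).symm, getRight_filterMap_rightPair z⟩⟩

theorem εNFA.exists_nfa_fin_accepts_eq {α σ : Type*} [Finite σ] (M : εNFA α σ) :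
    ∃ (n : ℕ) (A : NFA α (Fin n)), A.accepts = M.accepts :=
  ⟨_, (DFA.reindex (Finite.equivFin _) M.toNFA.toDFA).toNFA, by
    rw [DFA.toNFA_correct, DFA.accepts_reindex, NFA.toDFA_correct, εNFA.toNFA_correct]⟩

theorem stmt13_general {Ξ Θ Υ : Type}
    (R : List Ξ → List Θ → Prop) (S : List Θ → List Υ → Prop)
    (hR : ∃ (n : ℕ) (A : NFA (Ξ ⊕ Θ) (Fin n)), Recognises A R)
    (hS : ∃ (n : ℕ) (A : NFA (Θ ⊕ Υ) (Fin n)), Recognises A S) :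
    ∃ (n : ℕ) (A : NFA (Ξ ⊕ Υ) (Fin n)),
      Recognises A (fun s u => ∃ t : List Θ, R s t ∧ S t u) := by
  obtain ⟨_, A, hA⟩ := hR
  obtain ⟨_, B, hB⟩ := hS
  obtain ⟨n, C, hC⟩ := (A.relComp B).exists_nfa_fin_accepts_eq
  refine ⟨n, C, fun s u => ?_⟩
  rw [hA.relComp hB s u, hC, εNFA.toNFA_correct]

/-- If `R ⊆ Ξ* × Θ*` and `S ⊆ Θ* × Υ*` are recognised by NFAs with finitely many
states, then so is the composite relation
`R ; S = {(s, u) | ∃ t, R s t ∧ S t u}` over `Ξ ⊕ Υ`. -/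
theorem stmt13 {Ξ Θ Υ : Type} [Fintype Ξ] [Fintype Θ] [Fintype Υ]
    (R : List Ξ → List Θ → Prop) (S : List Θ → List Υ → Prop)
    (hR : ∃ (n : ℕ) (A : NFA (Ξ ⊕ Θ) (Fin n)), Recognises A R)
    (hS : ∃ (n : ℕ) (A : NFA (Θ ⊕ Υ) (Fin n)), Recognises A S) :
    ∃ (n : ℕ) (A : NFA (Ξ ⊕ Υ) (Fin n)),
      Recognises A (fun s u => ∃ t : List Θ, R s t ∧ S t u) :=
  stmt13_general R S hR hS
end
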